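/- Every simple graph with maximum degree Δ admits a proper edge coloring with at most Δ+1 colors (Vizing's theorem). -/

import Mathlib

/-!
Colour the edges one at a time with `Δ + 1` colours, never uncolouring an edge. Every vertex then
misses some colour. To colour `x y₀`, build a maximal Vizing fan `y₀, …, y_k` at `x`: the colour
of `x yᵢ₊₁` is missing at `yᵢ`. If a colour `β` missing at `y_k` is also missing at `x`, rotate the
fan: shift each colour of `x yᵢ₊₁` down to `x yᵢ` and colour `x y_k` with `β`. Otherwise, by
maximality, `β` sits on some `x yᵢ₊₁`, and `β` is missing at `yᵢ`. Take `α` missing at `x`. In the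
subgraph of `α`/`β`-edges every vertex has degree at most two and `x`, `yᵢ`, `y_k` have degree at
most one, so these three cannot lie in one component. Interchanging `α` and `β` on a suitable
component (of `x` or of `y_k`) then makes a rotation of the fan `y₀, …, yᵢ` or `y₀, …, y_k`
possible.
-/

open Finset

theorem Option.map_swap_eq_self {κ : Type*} [DecidableEq κ] {α β : κ} {o : Option κ}
    (hα : o ≠ some α) (hβ : o ≠ some β) : o.map (Equiv.swap α β) = o := by
  cases o with
  | none => rfl
  | some a =>
    exact congrArg some (Equiv.swap_apply_of_ne_of_ne (fun h ↦ hα (h ▸ rfl)) fun h ↦ hβ (h ▸ rfl))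

namespace SimpleGraph

variable {V κ : Type*} {G : SimpleGraph V}

/-- Otherwise the component of `x` would be a connected graph on `n` vertices with degree sum at
most `2 n - 3`, hence with fewer than `n - 1` edges. -/
theorem not_reachable_of_degree_le_one [Fintype V] {H : SimpleGraph V} [DecidableRel H.Adj]
    (hdeg : ∀ v, H.degree v ≤ 2) {x y z : V} (hxy : x ≠ y) (hxz : x ≠ z) (hyz : y ≠ z)
    (hx : H.degree x ≤ 1) (hy : H.degree y ≤ 1) (hz : H.degree z ≤ 1) (hr : H.Reachable x y) :
    ¬H.Reachable x z := by
  classical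
  intro hr'
  let C := H.connectedComponentMk x
  have hmem {v : V} (h : H.Reachable x v) : v ∈ C.supp :=
    (ConnectedComponent.mem_supp_iff _ _).mpr (ConnectedComponent.eq.mpr h.symm)
  let K := H.induce C.supp
  have hdegK (v : C.supp) : K.degree v = H.degree v :=
    degree_induce_of_neighborSet_subset fun _ hw ↦ C.mem_supp_of_adj_mem_supp v.2 hw
  have hdefect : 3 ≤ ∑ v, (2 - K.degree v) := by
    let s : Finset C.supp := {⟨x, hmem .rfl⟩, ⟨y, hmem hr⟩, ⟨z, hmem hr'⟩}
    calc 3 ≤ ∑ v ∈ s, (2 - K.degree v) := by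
          rw [sum_insert (by simp [hxy, hxz]), sum_insert (by simp [hyz]), sum_singleton]
          simp only [hdegK]
          omega
      _ ≤ ∑ v, (2 - K.degree v) := sum_le_univ_sum_of_nonneg fun _ ↦ Nat.zero_le _
  have hsplit : ∑ v, (2 - K.degree v) + ∑ v, K.degree v = 2 * Fintype.card C.supp := by
    rw [← sum_add_distrib, mul_comm, ← smul_eq_mul, ← Finset.card_univ, ← sum_const]
    exact sum_congr rfl fun v _ ↦ Nat.sub_add_cancel (hdegK v ▸ hdeg v)
  have hK : K.Connected := C.connected_toSimpleGraph
  have hedges := hK.card_vert_le_card_edgeSet_add_one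
  rw [Nat.card_eq_fintype_card, Nat.card_eq_fintype_card, ← edgeFinset_card] at hedges
  have hhand := K.sum_degrees_eq_twice_card_edges
  omega

structure PartialEdgeColoring (G : SimpleGraph V) (κ : Type*) where
  toFun : Sym2 V → Option κ
  adj_of_eq_some {u v : V} {a : κ} : toFun s(u, v) = some a → G.Adj u v
  eq_of_eq_some {u v w : V} {a : κ} : toFun s(u, v) = some a → toFun s(u, w) = some a → v = w

namespace PartialEdgeColoring

instance : CoeFun (PartialEdgeColoring G κ) (fun _ ↦ Sym2 V → Option κ) := ⟨toFun⟩

instance : Inhabited (PartialEdgeColoring G κ) :=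
  ⟨⟨fun _ ↦ none, nofun, nofun⟩⟩

variable (c : PartialEdgeColoring G κ)

def colored : Set (Sym2 V) := {e | c e ≠ none}

def IsFree (v : V) (a : κ) : Prop := ∀ u, c s(v, u) ≠ some a

theorem exists_isFree_of_degree_lt [Fintype κ] (v : V) [Fintype (G.neighborSet v)]
    (h : G.degree v < Fintype.card κ) : ∃ a, c.IsFree v a := by
  by_contra! hused
  simp only [IsFree, not_forall, not_not] at hused
  choose g hg using hused
  let g' : κ → G.neighborSet v := fun a ↦ ⟨g a, c.adj_of_eq_some (hg a)⟩
  have hg' : Function.Injective g' := fun a b hab ↦ by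
    have : g a = g b := congrArg Subtype.val hab
    exact Option.some_injective _ ((hg a).symm.trans (this ▸ hg b))
  have := Fintype.card_le_of_injective g' hg'
  rw [card_neighborSet_eq_degree] at this
  omega

section Recolor

variable [DecidableEq V] {c} {x z : V} {a : κ}

def recolor (hxz : G.Adj x z) (hx : c.IsFree x a) (hz : c.IsFree z a) :
    PartialEdgeColoring G κ where
  toFun := Function.update c s(x, z) (some a)
  adj_of_eq_some {u v b} h := by
    by_cases he : s(u, v) = s(x, z)
    · rcases Sym2.eq_iff.mp he with ⟨rfl, rfl⟩ | ⟨rfl, rfl⟩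
      exacts [hxz, hxz.symm]
    · exact c.adj_of_eq_some (by rwa [Function.update_of_ne he] at h)
  eq_of_eq_some {u v w b} hv hw := by
    have hfree : ∀ {v w}, s(u, v) = s(x, z) → s(u, w) ≠ s(x, z) →
        Function.update c s(x, z) (some a) s(u, v) = some b →
        Function.update c s(x, z) (some a) s(u, w) = some b → False := by
      intro v w hv hw h₁ h₂
      rw [hv, Function.update_self, Option.some_inj] at h₁
      rw [Function.update_of_ne hw, ← h₁] at h₂
      rcases Sym2.mem_iff.mp (hv ▸ Sym2.mem_mk_left u v) with rfl | rfl
      exacts [hx w h₂, hz w h₂]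
    by_cases hv' : s(u, v) = s(x, z) <;> by_cases hw' : s(u, w) = s(x, z)
    · exact Sym2.congr_right.mp (hv'.trans hw'.symm)
    · exact (hfree hv' hw' hv hw).elim
    · exact (hfree hw' hv' hw hv).elim
    · rw [Function.update_of_ne hv'] at hv
      rw [Function.update_of_ne hw'] at hw
      exact c.eq_of_eq_some hv hw

variable (hxz : G.Adj x z) (hx : c.IsFree x a) (hz : c.IsFree z a)

theorem recolor_apply_self : c.recolor hxz hx hz s(x, z) = some a :=
  Function.update_self ..

theorem recolor_apply_of_ne {e : Sym2 V} (he : e ≠ s(x, z)) : c.recolor hxz hx hz e = c e :=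
  Function.update_of_ne he ..

theorem colored_subset_recolor : c.colored ⊆ (c.recolor hxz hx hz).colored := by
  intro e he
  by_cases h : e = s(x, z)
  · subst h
    exact (recolor_apply_self hxz hx hz).trans_ne nofun
  · show _ ≠ none
    rwa [recolor_apply_of_ne hxz hx hz h]

theorem isFree_recolor {v : V} {b : κ} (hvx : v ≠ x) (hvz : v ≠ z) (hv : c.IsFree v b) :
    (c.recolor hxz hx hz).IsFree v b := by
  intro u
  rw [recolor_apply_of_ne]
  · exact hv u
  · intro h
    rcases Sym2.mem_iff.mp (h ▸ Sym2.mem_mk_left v u) with rfl | rfl <;> contradiction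

theorem isFree_recolor_left {b : κ} (hb : c s(x, z) = some b) :
    (c.recolor hxz hx hz).IsFree x b := by
  intro u
  by_cases hu : s(x, u) = s(x, z)
  · rw [hu, recolor_apply_self]
    rintro ⟨⟩
    exact hx z hb
  · rw [recolor_apply_of_ne _ _ _ hu]
    intro h
    exact hu (congrArg _ (c.eq_of_eq_some h hb))

end Recolor

section Kempe

open scoped Classical

variable (α β : κ)

def kempeGraph : SimpleGraph V := fromEdgeSet {e | c e = some α ∨ c e = some β}

variable {c α β}

theorem kempeGraph_adj {u v : V} :
    (c.kempeGraph α β).Adj u v ↔ c s(u, v) = some α ∨ c s(u, v) = some β := by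
  refine (fromEdgeSet_adj _).trans ⟨And.left, fun h ↦ ⟨h, ?_⟩⟩
  exact (h.elim c.adj_of_eq_some c.adj_of_eq_some).ne

theorem reachable_iff_of_eq_some (x₀ : V) {u v : V}
    (h : c s(u, v) = some α ∨ c s(u, v) = some β) :
    (c.kempeGraph α β).Reachable x₀ u ↔ (c.kempeGraph α β).Reachable x₀ v := by
  have hadj : (c.kempeGraph α β).Adj u v := kempeGraph_adj.mpr h
  exact ⟨fun h ↦ h.trans hadj.reachable, fun h ↦ h.trans hadj.symm.reachable⟩

variable [DecidableEq κ]

variable (c α β)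

noncomputable def kempeSwap (x₀ : V) : PartialEdgeColoring G κ where
  toFun := Sym2.lift ⟨fun u v ↦
      if (c.kempeGraph α β).Reachable x₀ u then (c s(u, v)).map (Equiv.swap α β) else c s(u, v),
    fun u v ↦ by
      dsimp only
      rw [Sym2.eq_swap (a := v)]
      by_cases h : c s(u, v) = some α ∨ c s(u, v) = some β
      · exact if_congr (reachable_iff_of_eq_some x₀ h) rfl rfl
      · push Not at h
        simp only [Option.map_swap_eq_self h.1 h.2, ite_self]⟩
  adj_of_eq_some {u v a} h := by
    dsimp only [Sym2.lift_mk] at h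
    split_ifs at h
    · obtain ⟨b, hb, -⟩ := Option.map_eq_some_iff.mp h
      exact c.adj_of_eq_some hb
    · exact c.adj_of_eq_some h
  eq_of_eq_some {u v w a} hv hw := by
    dsimp only [Sym2.lift_mk] at hv hw
    split_ifs at hv hw
    · obtain ⟨b, hb, rfl⟩ := Option.map_eq_some_iff.mp hv
      obtain ⟨b', hb', hbb'⟩ := Option.map_eq_some_iff.mp hw
      exact c.eq_of_eq_some hb ((Equiv.injective _ hbb') ▸ hb')
    · exact c.eq_of_eq_some hv hw

variable {c α β} {x₀ : V}

theorem kempeSwap_mk_eq_some_iff {u v : V} {a : κ} :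
    c.kempeSwap α β x₀ s(u, v) = some a ↔
      c s(u, v) = some (if (c.kempeGraph α β).Reachable x₀ u then Equiv.swap α β a else a) := by
  change (if _ then _ else _) = _ ↔ _
  split_ifs
  · rw [Option.map_eq_some_iff]
    constructor
    · rintro ⟨b, hb, rfl⟩
      rwa [Equiv.swap_apply_self]
    · exact fun h ↦ ⟨_, h, Equiv.swap_apply_self ..⟩
  · rfl

theorem isFree_kempeSwap_iff {u : V} {a : κ} :
    (c.kempeSwap α β x₀).IsFree u a ↔
      c.IsFree u (if (c.kempeGraph α β).Reachable x₀ u then Equiv.swap α β a else a) := by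
  simp only [IsFree, ne_eq, kempeSwap_mk_eq_some_iff]

theorem colored_kempeSwap : (c.kempeSwap α β x₀).colored = c.colored := by
  ext e
  induction e using Sym2.ind with
  | _ u v =>
    change (if _ then _ else _) ≠ none ↔ c s(u, v) ≠ none
    split_ifs <;> simp

theorem kempeSwap_mk_of_not_reachable {u : V} (hu : ¬(c.kempeGraph α β).Reachable x₀ u) (v : V) :
    c.kempeSwap α β x₀ s(u, v) = c s(u, v) :=
  if_neg hu

theorem kempeSwap_mk_of_ne {u v : V} (hα : c s(u, v) ≠ some α) (hβ : c s(u, v) ≠ some β) :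
    c.kempeSwap α β x₀ s(u, v) = c s(u, v) := by
  change (if _ then _ else _) = _
  rw [Option.map_swap_eq_self hα hβ, ite_self]

theorem isFree_kempeSwap_of_not_reachable {u : V} (hu : ¬(c.kempeGraph α β).Reachable x₀ u)
    {a : κ} (h : c.IsFree u a) : (c.kempeSwap α β x₀).IsFree u a := by
  rwa [isFree_kempeSwap_iff, if_neg hu]

theorem isFree_kempeSwap_of_ne {u : V} {a : κ} (hα : a ≠ α) (hβ : a ≠ β) (h : c.IsFree u a) :
    (c.kempeSwap α β x₀).IsFree u a := by
  rwa [isFree_kempeSwap_iff, Equiv.swap_apply_of_ne_of_ne hα hβ, ite_self]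

theorem isFree_kempeSwap_self_right (h : c.IsFree x₀ α) : (c.kempeSwap α β x₀).IsFree x₀ β := by
  rwa [isFree_kempeSwap_iff, if_pos (Reachable.refl _), Equiv.swap_apply_right]

theorem isFree_kempeSwap_self_left (h : c.IsFree x₀ β) : (c.kempeSwap α β x₀).IsFree x₀ α := by
  rwa [isFree_kempeSwap_iff, if_pos (Reachable.refl _), Equiv.swap_apply_left]

theorem degree_kempeGraph_le [Fintype V] (v : V) (s : Finset κ)
    (hs : ∀ a, (a = α ∨ a = β) → ¬c.IsFree v a → a ∈ s) : (c.kempeGraph α β).degree v ≤ #s := by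
  rw [← card_neighborFinset_eq_degree, ← card_image_of_injective s (Option.some_injective κ)]
  refine card_le_card_of_injOn (fun u ↦ c s(v, u)) (fun u hu ↦ ?_) fun u hu w hw huw ↦ ?_
  · rcases kempeGraph_adj.mp ((mem_neighborFinset _ _ _).mp hu) with h | h <;>
      exact (congrArg (· ∈ _) h).mpr (mem_image_of_mem _ (hs _ (by simp) fun hfree ↦ hfree u h))
  · rcases kempeGraph_adj.mp ((mem_neighborFinset _ _ _).mp hu) with h | h <;>
      exact c.eq_of_eq_some h (huw.symm.trans h)

theorem degree_kempeGraph_le_two [Fintype V] (v : V) :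
    (c.kempeGraph α β).degree v ≤ 2 :=
  (degree_kempeGraph_le v {α, β} fun a ha _ ↦ by rcases ha with rfl | rfl <;> simp).trans
    card_le_two

theorem degree_kempeGraph_le_one_of_isFree_left [Fintype V] {v : V} (hv : c.IsFree v α) :
    (c.kempeGraph α β).degree v ≤ 1 :=
  degree_kempeGraph_le v {β} fun a ha hna ↦ by
    rcases ha with rfl | rfl
    exacts [(hna hv).elim, mem_singleton_self a]

theorem degree_kempeGraph_le_one_of_isFree_right [Fintype V] {v : V} (hv : c.IsFree v β) :
    (c.kempeGraph α β).degree v ≤ 1 :=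
  degree_kempeGraph_le v {α} fun a ha hna ↦ by
    rcases ha with rfl | rfl
    exacts [mem_singleton_self a, (hna hv).elim]

end Kempe

section Fan

structure IsFan (x : V) (y : ℕ → V) (k : ℕ) : Prop where
  adj_zero : G.Adj x (y 0)
  injOn : Set.InjOn y (Set.Iic k)
  uncolored : c s(x, y 0) = none
  isFree : ∀ i < k, ∃ a, c s(x, y (i + 1)) = some a ∧ c.IsFree (y i) a

namespace IsFan

variable {c} {x : V} {y : ℕ → V} {k : ℕ}

theorem adj (h : c.IsFan x y k) {i : ℕ} (hi : i ≤ k) : G.Adj x (y i) := by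
  cases i with
  | zero => exact h.adj_zero
  | succ i =>
    obtain ⟨a, ha, -⟩ := h.isFree i hi
    exact c.adj_of_eq_some ha

theorem ne (h : c.IsFan x y k) {i j : ℕ} (hi : i ≤ k) (hj : j ≤ k) (hij : i ≠ j) : y i ≠ y j :=
  fun e ↦ hij (h.injOn hi hj e)

theorem mono (h : c.IsFan x y k) {j : ℕ} (hj : j ≤ k) : c.IsFan x y j :=
  ⟨h.adj_zero, h.injOn.mono (Set.Iic_subset_Iic.mpr hj), h.uncolored,
    fun i hi ↦ h.isFree i (hi.trans_le hj)⟩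

theorem add_one_le_card [Fintype V] (h : c.IsFan x y k) : k + 1 ≤ Fintype.card V := by
  have := card_le_card_of_injOn y (s := Iic k) (fun _ _ ↦ mem_univ _) (by simpa using h.injOn)
  simpa using this

theorem snoc [DecidableEq V] (h : c.IsFan x y k) {u : V} {a : κ} (hu : c s(x, u) = some a)
    (ha : c.IsFree (y k) a) (hnew : ∀ i ≤ k, y i ≠ u) :
    c.IsFan x (Function.update y (k + 1) u) (k + 1) := by
  have hy {i : ℕ} (hi : i ≤ k) : Function.update y (k + 1) u i = y i :=
    Function.update_of_ne (by omega) ..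
  refine ⟨hy (Nat.zero_le k) ▸ h.adj_zero, ?_, hy (Nat.zero_le k) ▸ h.uncolored, ?_⟩
  · intro i hi j hj e
    simp only [Set.mem_Iic] at hi hj
    rcases hi.lt_or_eq with hi | rfl <;> rcases hj.lt_or_eq with hj | rfl
    · rw [hy (by omega), hy (by omega)] at e
      exact h.injOn (Set.mem_Iic.mpr (by omega)) (Set.mem_Iic.mpr (by omega)) e
    · rw [hy (i := i) (by omega), Function.update_self] at e
      exact (hnew i (by omega) e).elim
    · rw [hy (i := j) (by omega), Function.update_self] at e
      exact (hnew j (by omega) e.symm).elim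
    · rfl
  · intro i hi
    rcases (Nat.lt_succ_iff.mp hi).lt_or_eq with hi | rfl
    · rw [hy hi, hy hi.le]
      exact h.isFree i hi
    · rw [hy le_rfl, Function.update_self]
      exact ⟨a, hu, ha⟩

theorem of_eq_of_isFree {c' : PartialEdgeColoring G κ} (h : c.IsFan x y k)
    (hedge : ∀ i ≤ k, c' s(x, y i) = c s(x, y i))
    (hfree : ∀ i < k, ∀ a, c s(x, y (i + 1)) = some a → c.IsFree (y i) a → c'.IsFree (y i) a) :
    c'.IsFan x y k := by
  refine ⟨h.adj_zero, h.injOn, (hedge 0 (Nat.zero_le k)).trans h.uncolored, fun i hi ↦ ?_⟩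
  obtain ⟨a, ha, hfa⟩ := h.isFree i hi
  exact ⟨a, (hedge (i + 1) hi).trans ha, hfree i hi a ha hfa⟩

/-- Fan rotation: recolouring `x (y k)` with `γ` frees its old colour at `x`, and that colour is
free at `y (k - 1)`, so induction on the length of the fan applies. -/
theorem exists_extension [DecidableEq V] (h : c.IsFan x y k) {γ : κ} (hx : c.IsFree x γ)
    (hk : c.IsFree (y k) γ) : ∃ c' : PartialEdgeColoring G κ, c.colored ⊆ c'.colored ∧
      s(x, y 0) ∈ c'.colored := by
  induction k generalizing c γ with
  | zero =>
    refine ⟨c.recolor h.adj_zero hx hk, colored_subset_recolor .., ?_⟩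
    exact (recolor_apply_self ..).trans_ne nofun
  | succ k ih =>
    obtain ⟨β, hβ, hβk⟩ := h.isFree k k.lt_succ_self
    have hadj := h.adj le_rfl
    set c₁ := c.recolor hadj hx hk
    have hne {i : ℕ} (hi : i ≤ k) : y i ≠ y (k + 1) := h.ne (by omega) le_rfl (by omega)
    have hfan : c₁.IsFan x y k := by
      refine (h.mono k.le_succ).of_eq_of_isFree (fun i hi ↦ ?_) (fun i hi a _ hfa ↦ ?_)
      · exact recolor_apply_of_ne _ _ _ fun e ↦ hne hi (Sym2.congr_right.mp e)
      · exact isFree_recolor _ _ _ (h.adj (by omega)).ne' (hne hi.le) hfa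
    obtain ⟨c', hc', hmem⟩ := ih hfan (isFree_recolor_left hadj hx hk hβ)
      (isFree_recolor _ _ _ (h.adj k.le_succ).ne' (hne le_rfl) hβk)
    exact ⟨c', (colored_subset_recolor ..).trans hc', hmem⟩

/-- Swapping on the `α`/`β` component of `x` makes `β` free at `x` without touching `y i`, so the
fan `y 0, …, y i` rotates with `β`. -/
theorem exists_extension_of_not_reachable [DecidableEq V] [DecidableEq κ] (h : c.IsFan x y k)
    {α β : κ} {i : ℕ} (hik : i < k) (hα : c.IsFree x α) (hβ : c s(x, y (i + 1)) = some β)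
    (hβi : c.IsFree (y i) β) (hr : ¬(c.kempeGraph α β).Reachable x (y i)) :
    ∃ c' : PartialEdgeColoring G κ, c.colored ⊆ c'.colored ∧ s(x, y 0) ∈ c'.colored := by
  have hcol {j : ℕ} (hj : j ≤ i) : c s(x, y j) ≠ some α ∧ c s(x, y j) ≠ some β :=
    ⟨hα _, fun e ↦ h.ne (by omega) hik (by omega) (c.eq_of_eq_some e hβ)⟩
  have hfan : (c.kempeSwap α β x).IsFan x y i := by
    refine (h.mono hik.le).of_eq_of_isFree (fun j hj ↦ kempeSwap_mk_of_ne (hcol hj).1 (hcol hj).2)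
      fun j hj a ha hfa ↦ isFree_kempeSwap_of_ne ?_ ?_ hfa
    exacts [fun e ↦ (hcol hj).1 (e ▸ ha), fun e ↦ (hcol hj).2 (e ▸ ha)]
  obtain ⟨c', hc', hmem⟩ := hfan.exists_extension (isFree_kempeSwap_self_right hα)
    (isFree_kempeSwap_of_not_reachable hr hβi)
  exact ⟨c', colored_kempeSwap.superset.trans hc', hmem⟩

/-- Swapping on the `α`/`β` component of `y k` makes `α` free at `y k` without touching `x` or
`y i`, so the whole fan rotates with `α`. -/
theorem exists_extension_of_not_reachable_last [DecidableEq V] [DecidableEq κ]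
    (h : c.IsFan x y k) {α β : κ} {i : ℕ} (hik : i < k) (hα : c.IsFree x α)
    (hβ : c s(x, y (i + 1)) = some β) (hβi : c.IsFree (y i) β) (hβk : c.IsFree (y k) β)
    (hrx : ¬(c.kempeGraph α β).Reachable (y k) x)
    (hri : ¬(c.kempeGraph α β).Reachable (y k) (y i)) :
    ∃ c' : PartialEdgeColoring G κ, c.colored ⊆ c'.colored ∧ s(x, y 0) ∈ c'.colored := by
  have hfan : (c.kempeSwap α β (y k)).IsFan x y k := by
    refine h.of_eq_of_isFree (fun j _ ↦ kempeSwap_mk_of_not_reachable hrx _) fun j hj a ha hfa ↦ ?_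
    by_cases haβ : a = β
    · subst haβ
      obtain rfl : j = i := by
        have := h.injOn (Set.mem_Iic.mpr hj) (Set.mem_Iic.mpr hik) (c.eq_of_eq_some ha hβ)
        omega
      exact isFree_kempeSwap_of_not_reachable hri hfa
    · exact isFree_kempeSwap_of_ne (fun e ↦ hα _ (e ▸ ha)) haβ hfa
  obtain ⟨c', hc', hmem⟩ := hfan.exists_extension (isFree_kempeSwap_of_not_reachable hrx hα)
    (isFree_kempeSwap_self_left hβk)
  exact ⟨c', colored_kempeSwap.superset.trans hc', hmem⟩

end IsFan

theorem exists_maximal_isFan [Fintype V] [DecidableEq V] {x y₀ : V} (hxy : G.Adj x y₀)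
    (h0 : c s(x, y₀) = none) : ∃ y k, c.IsFan x y k ∧ y 0 = y₀ ∧
      ∀ u a, c s(x, u) = some a → c.IsFree (y k) a → ∃ i ≤ k, y i = u := by
  classical
  let P (k : ℕ) : Prop := ∃ y, c.IsFan x y k ∧ y 0 = y₀
  have hP0 : P 0 := by
    refine ⟨fun _ ↦ y₀, ⟨hxy, fun i hi j hj _ ↦ ?_, h0, nofun⟩, rfl⟩
    simp only [Set.mem_Iic, nonpos_iff_eq_zero] at hi hj
    rw [hi, hj]
  obtain ⟨y, hy, hy0⟩ := Nat.findGreatest_spec (Nat.zero_le (Fintype.card V)) hP0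
  refine ⟨y, _, hy, hy0, fun u a hu ha ↦ ?_⟩
  by_contra! hnew
  have hsnoc := hy.snoc hu ha hnew
  have hP : P (Nat.findGreatest P (Fintype.card V) + 1) :=
    ⟨_, hsnoc, (Function.update_of_ne (by omega) ..).trans hy0⟩
  have hle : Nat.findGreatest P (Fintype.card V) + 1 ≤ Fintype.card V := by
    have := hsnoc.add_one_le_card
    omega
  have := Nat.le_findGreatest hle hP
  omega

end Fan

theorem exists_extension_of_adj [Fintype V] [DecidableEq V] [DecidableRel G.Adj] [Fintype κ]
    [DecidableEq κ] (hκ : G.maxDegree < Fintype.card κ) (c : PartialEdgeColoring G κ)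
    {x y₀ : V} (hxy : G.Adj x y₀) :
    ∃ c' : PartialEdgeColoring G κ, c.colored ⊆ c'.colored ∧ s(x, y₀) ∈ c'.colored := by
  classical
  by_cases h0 : c s(x, y₀) = none
  swap
  · exact ⟨c, subset_rfl, h0⟩
  have hfree (v : V) : ∃ a, c.IsFree v a :=
    c.exists_isFree_of_degree_lt v ((G.degree_le_maxDegree v).trans_lt hκ)
  obtain ⟨y, k, hfan, rfl, hmax⟩ := c.exists_maximal_isFan hxy h0
  obtain ⟨β, hβk⟩ := hfree (y k)
  by_cases hxβ : c.IsFree x β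
  · exact hfan.exists_extension hxβ hβk
  obtain ⟨w, hw⟩ : ∃ w, c s(x, w) = some β := by simpa [IsFree] using hxβ
  obtain ⟨j, hjk, rfl⟩ := hmax w β hw hβk
  obtain ⟨i, rfl⟩ : ∃ i, j = i + 1 :=
    Nat.exists_eq_succ_of_ne_zero (by rintro rfl; simp [hfan.uncolored] at hw)
  obtain ⟨β', hβ', hβi⟩ := hfan.isFree i hjk
  obtain rfl : β = β' := Option.some_injective _ (hw.symm.trans hβ')
  obtain ⟨α, hα⟩ := hfree x
  by_cases hr : (c.kempeGraph α β).Reachable x (y i)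
  · have hrk : ¬(c.kempeGraph α β).Reachable x (y k) :=
      not_reachable_of_degree_le_one degree_kempeGraph_le_two (hfan.adj (by omega)).ne
        (hfan.adj le_rfl).ne (hfan.ne (by omega) le_rfl (by omega))
        (degree_kempeGraph_le_one_of_isFree_left hα)
        (degree_kempeGraph_le_one_of_isFree_right hβi)
        (degree_kempeGraph_le_one_of_isFree_right hβk) hr
    exact hfan.exists_extension_of_not_reachable_last hjk hα hw hβi hβk (fun h ↦ hrk h.symm)
      fun h ↦ hrk (hr.trans h.symm)
  · exact hfan.exists_extension_of_not_reachable hjk hα hw hβi hr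

theorem exists_colored_superset [Fintype V] [DecidableEq V] [DecidableRel G.Adj] [Fintype κ]
    [DecidableEq κ] (hκ : G.maxDegree < Fintype.card κ) (s : Finset (Sym2 V))
    (hs : ↑s ⊆ G.edgeSet) : ∃ c : PartialEdgeColoring G κ, ↑s ⊆ c.colored := by
  induction s using Finset.induction_on with
  | empty => exact ⟨default, by simp⟩
  | insert e s _ ih =>
    rw [coe_insert, Set.insert_subset_iff] at hs
    rw [coe_insert]
    obtain ⟨c, hc⟩ := ih hs.2
    induction e using Sym2.ind with
    | _ x y =>
      obtain ⟨c', hcc', hmem⟩ := c.exists_extension_of_adj hκ hs.1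
      exact ⟨c', Set.insert_subset hmem (hc.trans hcc')⟩

theorem exists_proper_of_edgeSet_subset_colored [Fintype G.edgeSet]
    (hc : G.edgeSet ⊆ c.colored) : ∃ f : G.edgeFinset → κ, ∀ e e' : G.edgeFinset, e ≠ e' →
      (∃ v : V, v ∈ (e : Sym2 V) ∧ v ∈ (e' : Sym2 V)) → f e ≠ f e' := by
  refine ⟨fun e ↦ (c e).get (Option.isSome_iff_ne_none.mpr (hc (mem_edgeFinset.mp e.2))), ?_⟩
  rintro ⟨e, he⟩ ⟨e', he'⟩ hne ⟨v, hv, hv'⟩ heq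
  obtain ⟨u, rfl⟩ := Sym2.mem_iff_exists.mp hv
  obtain ⟨w, rfl⟩ := Sym2.mem_iff_exists.mp hv'
  obtain ⟨a, ha⟩ := Option.ne_none_iff_exists'.mp (hc (mem_edgeFinset.mp he))
  have ha' : c s(v, w) = some a := (Option.get_inj.mp heq) ▸ ha
  exact hne (Subtype.ext (congrArg (s(v, ·)) (c.eq_of_eq_some ha ha')))

end PartialEdgeColoring

end SimpleGraph

/-- Vizing's theorem: every finite simple graph with maximum degree `Δ` admits a proper
edge coloring with at most `Δ + 1` colors. -/
theorem vizing {V : Type*} [Fintype V] [DecidableEq V]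
    (G : SimpleGraph V) [DecidableRel G.Adj] :
    ∃ c : G.edgeFinset → Fin (G.maxDegree + 1),
      ∀ e f : G.edgeFinset, e ≠ f →
        (∃ v : V, v ∈ (e : Sym2 V) ∧ v ∈ (f : Sym2 V)) → c e ≠ c f := by
  obtain ⟨c, hc⟩ := SimpleGraph.PartialEdgeColoring.exists_colored_superset (G := G)
    (κ := Fin (G.maxDegree + 1)) (by simp) G.edgeFinset (by simp)
  exact c.exists_proper_of_edgeSet_subset_colored (by simpa using hc)
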